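/- arXiv:0901.2044 — 4 statements merged into one kernel-verified Lean document; each statement's English description precedes it below -/
import Mathlib

section
/- Suppose for every j ∈ {1,…,M} one has 2|V_j| ≤ ω_j, where V_j = (1/n)∑_{i=1}^n (f_j(X_i) − E f_j(X_i)). Let λ̂ minimize λ ↦ −(2/n)∑_i f_λ(X_i) + ‖f_λ‖² + 2∑_j ω_j|λ_j| over ℝ^M, and let f♠ = f_{λ̂}. Then for every λ ∈ ℝ^M: ‖f♠ − f‖² + ∑_{j=1}^M ω_j|λ̂_j − λ_j| ≤ ‖f_λ − f‖² + 4∑_{j∈J(λ)} ω_j|λ̂_j − λ_j|, where J(λ) = {j : λ_j ≠ 0}. -/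
open MeasureTheory Finset

/-! Writing `V_j = T_j - S_j` with `T_j` the empirical mean of `f_j` and `S_j = ⟨f_j, f⟩`,
the expansion `‖f_c - f‖² = ‖f_c‖² - 2 ∑ c_j S_j + ‖f‖²` turns the optimality of `λ̂` against
`λ` into `‖f♠ - f‖² ≤ ‖f_λ - f‖² + 2 ∑ (λ̂_j - λ_j) V_j + 2 ∑ ω_j (|λ_j| - |λ̂_j|)`.
On the event, `2 (λ̂_j - λ_j) V_j ≤ ω_j |λ̂_j - λ_j|`; for `λ_j ≠ 0` the triangle inequality
bounds `|λ_j| - |λ̂_j|` by `|λ̂_j - λ_j|`, and for `λ_j = 0` the penalty `-2 ω_j |λ̂_j|` absorbs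
both the noise term and the extra `ω_j |λ̂_j|` on the left. -/

section L2Expansion

variable {α ι : Type*} [MeasurableSpace α] {μ : Measure α} [Fintype ι]

lemma integral_sub_sq_eq {g f : α → ℝ} (hg : MemLp g 2 μ) (hf : MemLp f 2 μ) :
    ∫ x, (g x - f x) ^ 2 ∂μ
      = ∫ x, g x ^ 2 ∂μ - 2 * ∫ x, g x * f x ∂μ + ∫ x, f x ^ 2 ∂μ := by
  have hgf : Integrable (fun x => g x * f x) μ := hg.integrable_mul hf
  have hexp : (fun x => (g x - f x) ^ 2)
      = fun x => (g x ^ 2 - 2 * (g x * f x)) + f x ^ 2 := by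
    funext x; ring
  have hdiff : Integrable (fun x => g x ^ 2 - 2 * (g x * f x)) μ :=
    hg.integrable_sq.sub (hgf.const_mul 2)
  rw [hexp, integral_add hdiff hf.integrable_sq,
    integral_sub hg.integrable_sq (hgf.const_mul 2), integral_const_mul]

lemma integral_sum_mul_eq {g : ι → α → ℝ} {f : α → ℝ}
    (hgf : ∀ j, Integrable (fun x => g j x * f x) μ) (c : ι → ℝ) :
    ∫ x, (∑ j, c j * g j x) * f x ∂μ = ∑ j, c j * ∫ x, g j x * f x ∂μ := by
  simp only [sum_mul, mul_assoc]
  rw [integral_finsetSum _ fun j _ => (hgf j).const_mul (c j)]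
  simp only [integral_const_mul]

lemma integral_sum_sub_sq_eq {g : ι → α → ℝ} {f : α → ℝ}
    (hg : ∀ j, MemLp (g j) 2 μ) (hf : MemLp f 2 μ) (c : ι → ℝ) :
    ∫ x, (∑ j, c j * g j x - f x) ^ 2 ∂μ
      = ∫ x, (∑ j, c j * g j x) ^ 2 ∂μ - 2 * ∑ j, c j * ∫ x, g j x * f x ∂μ
        + ∫ x, f x ^ 2 ∂μ := by
  have hsum : MemLp (fun x => ∑ j, c j * g j x) 2 μ :=
    memLp_finsetSum univ fun j _ => (hg j).const_mul (c j)
  rw [integral_sub_sq_eq hsum hf,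
    integral_sum_mul_eq (fun j => (hg j).integrable_mul hf) c]

end L2Expansion

section Lasso

variable {ι : Type*} [Fintype ι]

lemma div_mul_sum_sum_eq {κ : Type*} [Fintype κ] (r m : ℝ) (c : ι → ℝ) (y : ι → κ → ℝ) :
    r / m * ∑ i, ∑ j, c j * y j i = r * ∑ j, c j * (m⁻¹ * ∑ i, y j i) := by
  rw [sum_comm]
  simp only [mul_sum]
  exact sum_congr rfl fun j _ => sum_congr rfl fun i _ => by ring

lemma two_mul_mul_le_mul_abs {u v w : ℝ} (hv : 2 * |v| ≤ w) : 2 * u * v ≤ w * |u| := by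
  have huv : u * v ≤ |u| * |v| := abs_mul u v ▸ le_abs_self (u * v)
  nlinarith [mul_le_mul_of_nonneg_left hv (abs_nonneg u)]

lemma lasso_coord_le {a b v w : ℝ} (hv : 2 * |v| ≤ w) :
    2 * (a - b) * v + 2 * w * (|b| - |a|) + w * |a - b|
      ≤ if b ≠ 0 then 4 * (w * |a - b|) else 0 := by
  have hcross := two_mul_mul_le_mul_abs (u := a - b) hv
  have hw : 0 ≤ w := le_trans (by positivity) hv
  split_ifs with hb
  · have htri : |b| - |a| ≤ |a - b| := by
      rw [abs_sub_comm]; exact abs_sub_abs_le_abs_sub b a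
    nlinarith [mul_le_mul_of_nonneg_left htri hw]
  · rw [not_not] at hb
    subst hb
    simp only [abs_zero, sub_zero] at hcross ⊢
    linarith

lemma lasso_sum_le (a b v w : ι → ℝ) (hv : ∀ j, 2 * |v j| ≤ w j) :
    2 * ∑ j, (a j - b j) * v j + 2 * ∑ j, w j * |b j| - 2 * ∑ j, w j * |a j|
        + ∑ j, w j * |a j - b j|
      ≤ 4 * ∑ j ∈ univ.filter fun j => b j ≠ 0, w j * |a j - b j| := by
  calc _ = ∑ j, (2 * (a j - b j) * v j + 2 * w j * (|b j| - |a j|) + w j * |a j - b j|) := by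
        simp only [mul_sum, ← sum_add_distrib, ← sum_sub_distrib]
        exact sum_congr rfl fun j _ => by ring
    _ ≤ ∑ j, if b j ≠ 0 then 4 * (w j * |a j - b j|) else 0 :=
        sum_le_sum fun j _ => lasso_coord_le (hv j)
    _ = _ := by rw [sum_filter, mul_sum]; simp only [mul_ite, mul_zero]

end Lasso

theorem spades_basic_oracle_general {d n M : ℕ}
    (X : Fin n → (Fin d → ℝ)) (f : (Fin d → ℝ) → ℝ)
    (fj : Fin M → (Fin d → ℝ) → ℝ) (ω : Fin M → ℝ)
    (hf : MemLp f 2 (volume : Measure (Fin d → ℝ)))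
    (hfj : ∀ j, MemLp (fj j) 2 (volume : Measure (Fin d → ℝ)))
    -- the event: 2|V_j| ≤ ω_j with V_j = (1/n)∑_i f_j(X_i) − E f_j(X_i), E f_j(X_i) = ∫ f_j f
    (hV : ∀ j, 2 * |(n : ℝ)⁻¹ * ∑ i, fj j (X i) - ∫ x, fj j x * f x| ≤ ω j)
    (lamhat : Fin M → ℝ)
    -- λ̂ minimizes the ℓ₁-penalized empirical criterion
    (hmin : ∀ lam : Fin M → ℝ,
      -(2 / n : ℝ) * ∑ i, ∑ j, lamhat j * fj j (X i)
          + (∫ x, (∑ j, lamhat j * fj j x) ^ 2) + 2 * ∑ j, ω j * |lamhat j|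
        ≤ -(2 / n : ℝ) * ∑ i, ∑ j, lam j * fj j (X i)
          + (∫ x, (∑ j, lam j * fj j x) ^ 2) + 2 * ∑ j, ω j * |lam j|) :
    ∀ lam : Fin M → ℝ,
      (∫ x, (∑ j, lamhat j * fj j x - f x) ^ 2) + ∑ j, ω j * |lamhat j - lam j|
        ≤ (∫ x, (∑ j, lam j * fj j x - f x) ^ 2)
          + 4 * ∑ j ∈ univ.filter fun j => lam j ≠ 0, ω j * |lamhat j - lam j| := by
  intro lam
  set T : Fin M → ℝ := fun j => (n : ℝ)⁻¹ * ∑ i, fj j (X i)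
  set S : Fin M → ℝ := fun j => ∫ x, fj j x * f x
  have hcrit := hmin lam
  simp only [neg_mul, div_mul_sum_sum_eq] at hcrit
  have hgap := lasso_sum_le lamhat lam (T - S) ω hV
  simp only [Pi.sub_apply, mul_sub, sub_mul, sum_sub_distrib] at hgap
  rw [integral_sum_sub_sq_eq hfj hf, integral_sum_sub_sq_eq hfj hf]
  linarith

/-- On the event where 2|V_j| ≤ ω_j for all j, the SPADES minimizer λ̂
satisfies, for every λ,
‖f♠ − f‖² + ∑_j ω_j|λ̂_j − λ_j| ≤ ‖f_λ − f‖² + 4∑_{j∈J(λ)} ω_j|λ̂_j − λ_j|. -/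
theorem spades_basic_oracle {d n M : ℕ} (hn : 0 < n)
    (X : Fin n → (Fin d → ℝ)) (f : (Fin d → ℝ) → ℝ)
    (fj : Fin M → (Fin d → ℝ) → ℝ) (ω : Fin M → ℝ) (hω : ∀ j, 0 < ω j)
    (hf : MemLp f 2 (volume : Measure (Fin d → ℝ)))
    (hfj : ∀ j, MemLp (fj j) 2 (volume : Measure (Fin d → ℝ)))
    (hf0 : ∀ x, 0 ≤ f x) (hf1 : ∫ x, f x = 1)
    -- the event: 2|V_j| ≤ ω_j with V_j = (1/n)∑_i f_j(X_i) − E f_j(X_i), E f_j(X_i) = ∫ f_j f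
    (hV : ∀ j, 2 * |(n : ℝ)⁻¹ * ∑ i, fj j (X i) - ∫ x, fj j x * f x| ≤ ω j)
    (lamhat : Fin M → ℝ)
    -- λ̂ minimizes the ℓ₁-penalized empirical criterion
    (hmin : ∀ lam : Fin M → ℝ,
      -(2 / n : ℝ) * ∑ i, ∑ j, lamhat j * fj j (X i)
          + (∫ x, (∑ j, lamhat j * fj j x) ^ 2) + 2 * ∑ j, ω j * |lamhat j|
        ≤ -(2 / n : ℝ) * ∑ i, ∑ j, lam j * fj j (X i)
          + (∫ x, (∑ j, lam j * fj j x) ^ 2) + 2 * ∑ j, ω j * |lam j|) :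
    ∀ lam : Fin M → ℝ,
      (∫ x, (∑ j, lamhat j * fj j x - f x) ^ 2) + ∑ j, ω j * |lamhat j - lam j|
        ≤ (∫ x, (∑ j, lam j * fj j x - f x) ^ 2)
          + 4 * ∑ j ∈ univ.filter fun j => lam j ≠ 0, ω j * |lamhat j - lam j| :=
  spades_basic_oracle_general X f fj ω hf hfj hV lamhat hmin
end

section
/- Let u ∈ ℝ^M, J ⊆ {1,…,M}, and suppose the Gram matrix restricted to indices outside J is positive semidefinite in the sense that ∑_{i,j∉J} ⟨f_i,f_j⟩ u_i u_j ≥ 0 (this always holds since it equals ‖∑_{j∉J} u_j f_j‖²). Define ρ = max_{i∈J} max_{j≠i} |⟨f_i,f_j⟩|/(‖f_i‖‖f_j‖), U(J) = ∑_{j∈J}|u_j|‖f_j‖, U = ∑_{j=1}^M |u_j|‖f_j‖. Then ∑_{j∈J} u_j²‖f_j‖² ≤ ‖∑_{j=1}^M u_j f_j‖² + 2ρ·U(J)·U − ρ·U(J)². -/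
open Finset

/-!
Split `∑ⱼ uⱼ fⱼ = x + y` with `x` the part indexed by `J` and `y` the rest. Then
`‖x + y‖² ≥ ‖x‖² + 2⟪x, y⟫`, and every Gram entry `⟪uᵢ fᵢ, uⱼ fⱼ⟫` with `i ∈ J`, `j ≠ i` is at least
`-ρ |uᵢ|‖fᵢ‖ |uⱼ|‖fⱼ‖`. Summing these entries gives `‖x‖² ≥ ∑_J uⱼ²‖fⱼ‖² - ρ U(J)²` and
`⟪x, y⟫ ≥ -ρ U(J) (U - U(J))`.
-/

section Coherence

variable {V : Type*} [SeminormedAddCommGroup V] [InnerProductSpace ℝ V]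

theorem abs_inner_smul_smul_le {x y : V} {ρ : ℝ} (h : |inner ℝ x y| ≤ ρ * (‖x‖ * ‖y‖)) (a b : ℝ) :
    |inner ℝ (a • x) (b • y)| ≤ ρ * (‖a • x‖ * ‖b • y‖) := by
  rw [real_inner_smul_left, real_inner_smul_right, norm_smul, norm_smul, abs_mul, abs_mul,
    Real.norm_eq_abs, Real.norm_eq_abs]
  calc |a| * (|b| * |inner ℝ x y|) ≤ |a| * (|b| * (ρ * (‖x‖ * ‖y‖))) := by gcongr
    _ = ρ * (|a| * ‖x‖ * (|b| * ‖y‖)) := by ring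

theorem sum_inter_norm_sq_sub_le_inner_sum {ι : Type*} [DecidableEq ι] (s t : Finset ι)
    (v : ι → V) {ρ : ℝ} (hρ0 : 0 ≤ ρ)
    (hρ : ∀ i ∈ s, ∀ j ∈ t, j ≠ i → |inner ℝ (v i) (v j)| ≤ ρ * (‖v i‖ * ‖v j‖)) :
    ∑ j ∈ s ∩ t, ‖v j‖ ^ 2 - ρ * (∑ i ∈ s, ‖v i‖) * (∑ j ∈ t, ‖v j‖)
      ≤ inner ℝ (∑ i ∈ s, v i) (∑ j ∈ t, v j) := by
  have hentry : ∀ i ∈ s, ∀ j ∈ t,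
      (if i = j then ‖v j‖ ^ 2 else 0) - ρ * (‖v i‖ * ‖v j‖) ≤ inner ℝ (v i) (v j) := by
    intro i hi j hj
    split_ifs with hij
    · subst hij
      rw [real_inner_self_eq_norm_sq]
      nlinarith [norm_nonneg (v i)]
    · linarith [neg_abs_le (inner ℝ (v i) (v j)), hρ i hi j hj (Ne.symm hij)]
  calc ∑ j ∈ s ∩ t, ‖v j‖ ^ 2 - ρ * (∑ i ∈ s, ‖v i‖) * (∑ j ∈ t, ‖v j‖)
      = ∑ i ∈ s, ∑ j ∈ t,
          ((if i = j then ‖v j‖ ^ 2 else 0) - ρ * (‖v i‖ * ‖v j‖)) := by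
        rw [mul_assoc, sum_mul_sum]
        simp only [sum_sub_distrib, sum_ite_eq, sum_ite_mem, mul_sum]
    _ ≤ ∑ i ∈ s, ∑ j ∈ t, inner ℝ (v i) (v j) :=
        sum_le_sum fun i hi => sum_le_sum fun j hj => hentry i hi j hj
    _ = inner ℝ (∑ i ∈ s, v i) (∑ j ∈ t, v j) := by
        rw [sum_inner]
        simp only [inner_sum]

end Coherence

theorem spades_local_coherence_bound_general {M : ℕ} {V : Type*} [NormedAddCommGroup V]
    [InnerProductSpace ℝ V] (f : Fin M → V)
    (u : Fin M → ℝ) (J : Finset (Fin M)) (ρ : ℝ) (hρ0 : 0 ≤ ρ)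
    (hρ : ∀ i ∈ J, ∀ j, j ≠ i → |(inner ℝ (f i) (f j) : ℝ)| ≤ ρ * (‖f i‖ * ‖f j‖)) :
    ∑ j ∈ J, (u j) ^ 2 * ‖f j‖ ^ 2
      ≤ ‖∑ j, u j • f j‖ ^ 2
        + 2 * ρ * (∑ j ∈ J, |u j| * ‖f j‖) * (∑ j, |u j| * ‖f j‖)
        - ρ * (∑ j ∈ J, |u j| * ‖f j‖) ^ 2 := by
  set v : Fin M → V := fun j => u j • f j
  have hnorm : ∀ j, ‖v j‖ = |u j| * ‖f j‖ := fun j => by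
    rw [norm_smul, Real.norm_eq_abs]
  have hv : ∀ i ∈ J, ∀ j, j ≠ i → |inner ℝ (v i) (v j)| ≤ ρ * (‖v i‖ * ‖v j‖) :=
    fun i hi j hj => abs_inner_smul_smul_le (hρ i hi j hj) (u i) (u j)
  have hJJ := sum_inter_norm_sq_sub_le_inner_sum J J v hρ0 fun i hi j _ => hv i hi j
  have hJJc := sum_inter_norm_sq_sub_le_inner_sum J Jᶜ v hρ0 fun i hi j _ => hv i hi j
  simp only [inter_self, inter_compl, sum_empty, real_inner_self_eq_norm_sq, hnorm, mul_pow,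
    sq_abs] at hJJ hJJc
  have hsplit := norm_add_sq_real (∑ j ∈ J, v j) (∑ j ∈ Jᶜ, v j)
  rw [sum_add_sum_compl] at hsplit
  rw [← sum_add_sum_compl J fun j => |u j| * ‖f j‖]
  linarith [sq_nonneg ‖∑ j ∈ Jᶜ, v j‖]

/-- local coherence bound:
∑_{j∈J} u_j²‖f_j‖² ≤ ‖∑_j u_j f_j‖² + 2ρ·U(J)·U − ρ·U(J)². -/
theorem spades_local_coherence_bound {M : ℕ} {V : Type*} [NormedAddCommGroup V]
    [InnerProductSpace ℝ V] (f : Fin M → V) (hf : ∀ j, f j ≠ 0)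
    (u : Fin M → ℝ) (J : Finset (Fin M)) (ρ : ℝ) (hρ0 : 0 ≤ ρ)
    (hρ : ∀ i ∈ J, ∀ j, j ≠ i → |(inner ℝ (f i) (f j) : ℝ)| ≤ ρ * (‖f i‖ * ‖f j‖)) :
    ∑ j ∈ J, (u j) ^ 2 * ‖f j‖ ^ 2
      ≤ ‖∑ j, u j • f j‖ ^ 2
        + 2 * ρ * (∑ j ∈ J, |u j| * ‖f j‖) * (∑ j, |u j| * ‖f j‖)
        - ρ * (∑ j ∈ J, |u j| * ‖f j‖) ^ 2 :=
  spades_local_coherence_bound_general f u J ρ hρ0 hρ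
end

section
/- With the notation of the previous coherence bound, if additionally U(J)² ≤ |J|·∑_{j∈J} u_j²‖f_j‖² (Cauchy–Schwarz), then U(J) ≤ 2ρ|J|·U + √|J|·‖∑_{j=1}^M u_j f_j‖. -/
open Finset
open scoped InnerProductSpace

/-!
Write `g = ∑_{j∈J} u_j f_j`, `S = ∑_j u_j f_j`, `A = U(J)` and `Q = ∑_{j∈J} u_j²‖f_j‖²`.
Expanding `⟪g, S⟫` and `‖g‖²` into Gram sums, the diagonal contributes exactly `Q` and the
off-diagonal terms at most `ρ A U`, so `Q ≤ ‖g‖‖S‖ + ρAU` and `‖g‖² ≤ Q + ρAU`.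
With `t = √(|J|(Q + ρAU))` the Cauchy–Schwarz hypothesis gives `A ≤ t`, the second estimate
gives `√|J|‖g‖ ≤ t`, and the first then reads `t² ≤ t (√|J|‖S‖ + 2ρ|J|U)`.
-/

section Gram

variable {ι V : Type*} [NormedAddCommGroup V] [InnerProductSpace ℝ V]

theorem inner_sum_smul_sum_smul (f : ι → V) (u : ι → ℝ) (J K : Finset ι) :
    ⟪∑ i ∈ J, u i • f i, ∑ j ∈ K, u j • f j⟫_ℝ
      = ∑ i ∈ J, ∑ j ∈ K, u i * u j * ⟪f i, f j⟫_ℝ := by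
  rw [sum_inner]
  refine sum_congr rfl fun i _ => ?_
  rw [inner_sum]
  refine sum_congr rfl fun j _ => ?_
  rw [real_inner_smul_left, real_inner_smul_right, mul_assoc]

theorem abs_inner_sum_smul_sub_diag_le [DecidableEq ι] (f : ι → V) (u : ι → ℝ)
    {J K : Finset ι} (hJK : J ⊆ K) {ρ : ℝ} (hρ0 : 0 ≤ ρ)
    (hρ : ∀ i ∈ J, ∀ j ∈ K, j ≠ i → |⟪f i, f j⟫_ℝ| ≤ ρ * (‖f i‖ * ‖f j‖)) :
    |⟪∑ i ∈ J, u i • f i, ∑ j ∈ K, u j • f j⟫_ℝ - ∑ i ∈ J, u i ^ 2 * ‖f i‖ ^ 2|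
      ≤ ρ * (∑ i ∈ J, |u i| * ‖f i‖) * ∑ j ∈ K, |u j| * ‖f j‖ := by
  have off_diag : ⟪∑ i ∈ J, u i • f i, ∑ j ∈ K, u j • f j⟫_ℝ - ∑ i ∈ J, u i ^ 2 * ‖f i‖ ^ 2
      = ∑ i ∈ J, ∑ j ∈ K.erase i, u i * u j * ⟪f i, f j⟫_ℝ := by
    rw [inner_sum_smul_sum_smul, ← sum_sub_distrib]
    refine sum_congr rfl fun i hi => ?_
    rw [← add_sum_erase K _ (hJK hi), real_inner_self_eq_norm_sq]
    ring
  have term_le : ∀ i ∈ J, ∀ j ∈ K.erase i,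
      |u i * u j * ⟪f i, f j⟫_ℝ| ≤ ρ * ((|u i| * ‖f i‖) * (|u j| * ‖f j‖)) := by
    intro i hi j hj
    calc |u i * u j * ⟪f i, f j⟫_ℝ| = |u i| * |u j| * |⟪f i, f j⟫_ℝ| := by
          rw [abs_mul, abs_mul]
      _ ≤ |u i| * |u j| * (ρ * (‖f i‖ * ‖f j‖)) := by
          gcongr
          exact hρ i hi j (mem_of_mem_erase hj) (ne_of_mem_erase hj)
      _ = ρ * ((|u i| * ‖f i‖) * (|u j| * ‖f j‖)) := by ring
  rw [off_diag, mul_assoc, sum_mul_sum, mul_sum]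
  calc |∑ i ∈ J, ∑ j ∈ K.erase i, u i * u j * ⟪f i, f j⟫_ℝ|
      ≤ ∑ i ∈ J, ∑ j ∈ K.erase i, |u i * u j * ⟪f i, f j⟫_ℝ| :=
        (abs_sum_le_sum_abs _ _).trans (sum_le_sum fun i _ => abs_sum_le_sum_abs _ _)
    _ ≤ ∑ i ∈ J, ∑ j ∈ K.erase i, ρ * ((|u i| * ‖f i‖) * (|u j| * ‖f j‖)) :=
        sum_le_sum fun i hi => sum_le_sum fun j hj => term_le i hi j hj
    _ ≤ ∑ i ∈ J, ρ * ∑ j ∈ K, (|u i| * ‖f i‖) * (|u j| * ‖f j‖) := by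
        refine sum_le_sum fun i _ => ?_
        rw [← mul_sum]
        gcongr
        exact erase_subset _ _

end Gram

theorem le_two_mul_add_sqrt_mul_of_gram_estimates {A Q G N n c : ℝ}
    (hA : 0 ≤ A) (hN : 0 ≤ N) (hn : 0 ≤ n) (hc : 0 ≤ c)
    (hAQ : A ^ 2 ≤ n * Q) (hGQ : G ^ 2 ≤ Q + c * A) (hQG : Q ≤ G * N + c * A) :
    A ≤ 2 * n * c + √n * N := by
  set t := √(n * (Q + c * A))
  have ht : 0 ≤ t := Real.sqrt_nonneg _
  have hncA : 0 ≤ n * c * A := by positivity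
  have hAt : A ≤ t := Real.le_sqrt_of_sq_le (by linarith)
  have hGt : √n * G ≤ t := Real.le_sqrt_of_sq_le (by rw [mul_pow, Real.sq_sqrt hn]; nlinarith)
  have htt : t * t ≤ t * (√n * N + 2 * n * c) :=
    calc t * t = n * Q + n * c * A := by rw [Real.mul_self_sqrt (by nlinarith)]; ring
      _ ≤ (√n * G) * (√n * N) + 2 * n * c * A := by
          rw [mul_mul_mul_comm, Real.mul_self_sqrt hn]; nlinarith
      _ ≤ t * (√n * N) + 2 * n * c * t := by gcongr
      _ = t * (√n * N + 2 * n * c) := by ring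
  rcases ht.eq_or_lt with h | h
  · have : 0 ≤ √n * N := by positivity
    nlinarith
  · linarith [le_of_mul_le_mul_left htt h]

theorem spades_local_coherence_U_bound_general {M : ℕ} {V : Type*} [NormedAddCommGroup V]
    [InnerProductSpace ℝ V] (f : Fin M → V)
    (u : Fin M → ℝ) (J : Finset (Fin M)) (ρ : ℝ) (hρ0 : 0 ≤ ρ)
    (hρ : ∀ i ∈ J, ∀ j, j ≠ i → |(inner ℝ (f i) (f j) : ℝ)| ≤ ρ * (‖f i‖ * ‖f j‖))
    (hCS : (∑ j ∈ J, |u j| * ‖f j‖) ^ 2 ≤ (J.card : ℝ) * ∑ j ∈ J, (u j) ^ 2 * ‖f j‖ ^ 2) :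
    ∑ j ∈ J, |u j| * ‖f j‖
      ≤ 2 * ρ * (J.card : ℝ) * (∑ j, |u j| * ‖f j‖)
        + Real.sqrt (J.card : ℝ) * ‖∑ j, u j • f j‖ := by
  set g := ∑ j ∈ J, u j • f j
  set A := ∑ j ∈ J, |u j| * ‖f j‖
  set U := ∑ j, |u j| * ‖f j‖
  have hAU : A ≤ U :=
    sum_le_sum_of_subset_of_nonneg (subset_univ J) fun _ _ _ => by positivity
  have hgS := abs_le.mp (abs_inner_sum_smul_sub_diag_le f u (subset_univ J) hρ0
    fun i hi j _ => hρ i hi j)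
  have hgg := abs_le.mp (abs_inner_sum_smul_sub_diag_le f u subset_rfl hρ0
    fun i hi j _ => hρ i hi j)
  rw [real_inner_self_eq_norm_sq] at hgg
  have hρAA : ρ * A * A ≤ ρ * A * U := by gcongr
  have key := le_two_mul_add_sqrt_mul_of_gram_estimates (by positivity)
    (norm_nonneg (∑ j, u j • f j)) (Nat.cast_nonneg J.card) (by positivity : 0 ≤ ρ * U) hCS
    (by linarith) (by linarith [real_inner_le_norm g (∑ j, u j • f j)])
  linarith

/-- with the Cauchy–Schwarz relation U(J)² ≤ |J|·∑_{j∈J} u_j²‖f_j‖²,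
one gets U(J) ≤ 2ρ|J|·U + √|J|·‖∑_j u_j f_j‖. -/
theorem spades_local_coherence_U_bound {M : ℕ} {V : Type*} [NormedAddCommGroup V]
    [InnerProductSpace ℝ V] (f : Fin M → V) (hf : ∀ j, f j ≠ 0)
    (u : Fin M → ℝ) (J : Finset (Fin M)) (ρ : ℝ) (hρ0 : 0 ≤ ρ)
    (hρ : ∀ i ∈ J, ∀ j, j ≠ i → |(inner ℝ (f i) (f j) : ℝ)| ≤ ρ * (‖f i‖ * ‖f j‖))
    (hCS : (∑ j ∈ J, |u j| * ‖f j‖) ^ 2 ≤ (J.card : ℝ) * ∑ j ∈ J, (u j) ^ 2 * ‖f j‖ ^ 2) :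
    ∑ j ∈ J, |u j| * ‖f j‖
      ≤ 2 * ρ * (J.card : ℝ) * (∑ j, |u j| * ‖f j‖)
        + Real.sqrt (J.card : ℝ) * ‖∑ j, u j • f j‖ :=
  spades_local_coherence_U_bound_general f u J ρ hρ0 hρ hCS
end

section
/- Any two minimizers λ̄⁽¹⁾, λ̄⁽²⁾ of the convex function g(λ) = −(2/n)∑_{i=1}^n f_λ(X_i) + ‖f_λ‖² + 8rL∑_k |λ_k| satisfy ∑_{j=1}^M (λ̄_j⁽¹⁾ − λ̄_j⁽²⁾)⟨f_j, f_k⟩ = 0 for all k ∈ {1,…,M}; equivalently, f_{λ̄⁽¹⁾} = f_{λ̄⁽²⁾} in L². Consequently, all minimizers have the same set {k : |(1/n)∑_i f_k(X_i) − ∑_j λ̄_j⟨f_j,f_k⟩| = 4rL} containing the supports of all minimizers. -/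
open MeasureTheory Finset

/-! The objective is a linear term plus the convex `ℓ¹` penalty plus `λ ↦ ‖f_λ‖²`, and the
parallelogram law gives `‖f_{(a+b)/2}‖² = (‖f_a‖² + ‖f_b‖²)/2 − ‖f_a − f_b‖²/4`. So at the midpoint
of two minimizers the objective is at most the minimum minus `‖f_{λ¹} − f_{λ²}‖²/4`, which forces
`f_{λ¹} = f_{λ²}` a.e.; then the Gram sums `∑ⱼ λⱼ⟨fⱼ, fₖ⟩ = ⟨f_λ, fₖ⟩`, and with them the sets of
active indices, coincide. -/

section Dictionary

variable {α ι : Type*} [MeasurableSpace α] {μ : Measure α} [Fintype ι] {f : ι → α → ℝ}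

lemma memLp_sum_const_mul {p : ENNReal} (hf : ∀ j, MemLp (f j) p μ) (c : ι → ℝ) :
    MemLp (fun x => ∑ j, c j * f j x) p μ :=
  memLp_finsetSum _ fun j _ => (hf j).const_mul (c j)

lemma sum_mul_integral_mul {g : α → ℝ} (hfg : ∀ j, Integrable (fun x => f j x * g x) μ)
    (c : ι → ℝ) :
    ∑ j, c j * ∫ x, f j x * g x ∂μ = ∫ x, (∑ j, c j * f j x) * g x ∂μ := by
  simp_rw [sum_mul, mul_assoc, ← integral_const_mul]
  exact (integral_finsetSum _ fun j _ => (hfg j).const_mul (c j)).symm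

lemma sum_midpoint_mul (a b : ι → ℝ) (y : ι → ℝ) :
    ∑ j, (a j + b j) / 2 * y j = (∑ j, a j * y j + ∑ j, b j * y j) / 2 := by
  rw [← sum_add_distrib, sum_div]
  exact sum_congr rfl fun j _ => by ring

lemma sum_abs_midpoint_le (a b : ι → ℝ) :
    ∑ j, |(a j + b j) / 2| ≤ (∑ j, |a j| + ∑ j, |b j|) / 2 := by
  rw [← sum_add_distrib, sum_div]
  refine sum_le_sum fun j _ => ?_
  rw [abs_div, abs_two]
  gcongr
  exact abs_add_le _ _

end Dictionary

section Integral

variable {α : Type*} [MeasurableSpace α] {μ : Measure α} {f g : α → ℝ}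

lemma integral_midpoint_sq (hf : MemLp f 2 μ) (hg : MemLp g 2 μ) :
    ∫ x, ((f x + g x) / 2) ^ 2 ∂μ
      = (∫ x, f x ^ 2 ∂μ + ∫ x, g x ^ 2 ∂μ) / 2 - (∫ x, (f x - g x) ^ 2 ∂μ) / 4 := by
  have hf2 : Integrable (fun x => f x ^ 2 / 2) μ := hf.integrable_sq.div_const 2
  have hg2 : Integrable (fun x => g x ^ 2 / 2) μ := hg.integrable_sq.div_const 2
  have hfg2 : Integrable (fun x => (f x - g x) ^ 2 / 4) μ := (hf.sub hg).integrable_sq.div_const 4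
  calc ∫ x, ((f x + g x) / 2) ^ 2 ∂μ
      = ∫ x, (f x ^ 2 / 2 + g x ^ 2 / 2 - (f x - g x) ^ 2 / 4) ∂μ := by
        congr 1; ext x; ring
    _ = _ := by
        have hfg : Integrable (fun x => f x ^ 2 / 2 + g x ^ 2 / 2) μ := hf2.add hg2
        rw [integral_sub hfg hfg2, integral_add hf2 hg2, integral_div, integral_div,
          integral_div]
        ring

lemma ae_eq_of_integral_sq_sub_eq_zero (hf : MemLp f 2 μ) (hg : MemLp g 2 μ)
    (h : ∫ x, (f x - g x) ^ 2 ∂μ = 0) : f =ᵐ[μ] g := by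
  have hsq := (integral_eq_zero_iff_of_nonneg (fun x => sq_nonneg (f x - g x))
    (hf.sub hg).integrable_sq).mp h
  filter_upwards [hsq] with x hx
  exact sub_eq_zero.mp (pow_eq_zero_iff two_ne_zero |>.mp hx)

end Integral

section Objective

variable {α ι : Type*} [MeasurableSpace α] {μ : Measure α} [Fintype ι] {f : ι → α → ℝ}

/-- The paper's `g` is `penalizedObjective volume f X (2 / n) (8 * r * L)`. -/
noncomputable def penalizedObjective {n : ℕ} (μ : Measure α) (f : ι → α → ℝ) (X : Fin n → α)
    (c κ : ℝ) (lam : ι → ℝ) : ℝ :=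
  -c * ∑ i, ∑ j, lam j * f j (X i) + (∫ x, (∑ j, lam j * f j x) ^ 2 ∂μ) + κ * ∑ k, |lam k|

lemma penalizedObjective_midpoint_le {n : ℕ} (hf : ∀ j, MemLp (f j) 2 μ) (X : Fin n → α)
    (c : ℝ) {κ : ℝ} (hκ : 0 ≤ κ) (a b : ι → ℝ) :
    penalizedObjective μ f X c κ (fun j => (a j + b j) / 2)
      ≤ (penalizedObjective μ f X c κ a + penalizedObjective μ f X c κ b) / 2
        - (∫ x, (∑ j, a j * f j x - ∑ j, b j * f j x) ^ 2 ∂μ) / 4 := by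
  have hdata : ∑ i, ∑ j, (a j + b j) / 2 * f j (X i)
      = (∑ i, ∑ j, a j * f j (X i) + ∑ i, ∑ j, b j * f j (X i)) / 2 := by
    simp only [sum_midpoint_mul, ← sum_add_distrib, sum_div]
  have hquad := integral_midpoint_sq (memLp_sum_const_mul hf a) (memLp_sum_const_mul hf b)
  simp only [← sum_midpoint_mul] at hquad
  have hpen := mul_le_mul_of_nonneg_left (sum_abs_midpoint_le a b) hκ
  unfold penalizedObjective
  rw [hdata, hquad]
  linarith

lemma sum_sub_mul_integral_mul_eq_zero (hf : ∀ j, MemLp (f j) 2 μ) {a b : ι → ℝ}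
    (h : ∫ x, (∑ j, a j * f j x - ∑ j, b j * f j x) ^ 2 ∂μ = 0) (k : ι) :
    ∑ j, (a j - b j) * ∫ x, f j x * f k x ∂μ = 0 := by
  have hab :=
    ae_eq_of_integral_sq_sub_eq_zero (memLp_sum_const_mul hf a) (memLp_sum_const_mul hf b) h
  rw [sum_mul_integral_mul (fun j => (hf j).integrable_mul (hf k))]
  refine integral_eq_zero_of_ae ?_
  filter_upwards [hab] with x hx
  simp only [sub_mul, sum_sub_distrib, hx, sub_self, zero_mul, Pi.zero_apply]

end Objective

theorem spades_minimizers_same_support_general {d n M : ℕ}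
    (X : Fin n → (Fin d → ℝ)) (fj : Fin M → (Fin d → ℝ) → ℝ)
    (hfj : ∀ j, MemLp (fj j) 2 (volume : Measure (Fin d → ℝ)))
    (r L : ℝ) (hr : 0 < r) (hL : 0 < L)
    (lam1 lam2 : Fin M → ℝ)
    (hmin1 : ∀ lam : Fin M → ℝ,
      -(2 / n : ℝ) * ∑ i, ∑ j, lam1 j * fj j (X i)
          + (∫ x, (∑ j, lam1 j * fj j x) ^ 2) + 8 * r * L * ∑ k, |lam1 k|
        ≤ -(2 / n : ℝ) * ∑ i, ∑ j, lam j * fj j (X i)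
          + (∫ x, (∑ j, lam j * fj j x) ^ 2) + 8 * r * L * ∑ k, |lam k|)
    (hmin2 : ∀ lam : Fin M → ℝ,
      -(2 / n : ℝ) * ∑ i, ∑ j, lam2 j * fj j (X i)
          + (∫ x, (∑ j, lam2 j * fj j x) ^ 2) + 8 * r * L * ∑ k, |lam2 k|
        ≤ -(2 / n : ℝ) * ∑ i, ∑ j, lam j * fj j (X i)
          + (∫ x, (∑ j, lam j * fj j x) ^ 2) + 8 * r * L * ∑ k, |lam k|) :
    (∀ k : Fin M, ∑ j, (lam1 j - lam2 j) * ∫ x, fj j x * fj k x = 0)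
    ∧ (∫ x, (∑ j, lam1 j * fj j x - ∑ j, lam2 j * fj j x) ^ 2) = 0
    ∧ {k : Fin M |
          |(n : ℝ)⁻¹ * ∑ i, fj k (X i) - ∑ j, lam1 j * ∫ x, fj j x * fj k x| = 4 * r * L}
        = {k : Fin M |
          |(n : ℝ)⁻¹ * ∑ i, fj k (X i) - ∑ j, lam2 j * ∫ x, fj j x * fj k x| = 4 * r * L} := by
  set mid : Fin M → ℝ := fun j => (lam1 j + lam2 j) / 2
  have hconv := penalizedObjective_midpoint_le hfj X (2 / n) (by positivity : 0 ≤ 8 * r * L)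
    lam1 lam2
  have h1 : penalizedObjective volume fj X (2 / n) (8 * r * L) lam1
      ≤ penalizedObjective volume fj X (2 / n) (8 * r * L) mid := hmin1 mid
  have h2 : penalizedObjective volume fj X (2 / n) (8 * r * L) lam2
      ≤ penalizedObjective volume fj X (2 / n) (8 * r * L) mid := hmin2 mid
  have hL2 : ∫ x, (∑ j, lam1 j * fj j x - ∑ j, lam2 j * fj j x) ^ 2 = 0 :=
    le_antisymm (by linarith) (integral_nonneg fun x => sq_nonneg _)
  have hgram := sum_sub_mul_integral_mul_eq_zero hfj hL2
  refine ⟨hgram, hL2, ?_⟩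
  have hsame : ∀ k, ∑ j, lam1 j * ∫ x, fj j x * fj k x = ∑ j, lam2 j * ∫ x, fj j x * fj k x :=
    fun k => by simpa only [sub_mul, sum_sub_distrib, sub_eq_zero] using hgram k
  ext k
  simp only [Set.mem_ofPred_eq, hsame k]

/-- Lemma A.1(II): any two minimizers λ̄⁽¹⁾, λ̄⁽²⁾ of
g(λ) = −(2/n)∑_i f_λ(X_i) + ‖f_λ‖² + 8rL∑_k|λ_k| satisfy
∑_j (λ̄_j⁽¹⁾ − λ̄_j⁽²⁾)⟨f_j,f_k⟩ = 0 for all k, equivalently f_{λ̄⁽¹⁾} = f_{λ̄⁽²⁾} in L²;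
consequently the sets {k : |(1/n)∑_i f_k(X_i) − ∑_j λ̄_j⟨f_j,f_k⟩| = 4rL} coincide. -/
theorem spades_minimizers_same_support {d n M : ℕ} (hn : 0 < n)
    (X : Fin n → (Fin d → ℝ)) (fj : Fin M → (Fin d → ℝ) → ℝ)
    (hfj : ∀ j, MemLp (fj j) 2 (volume : Measure (Fin d → ℝ)))
    (r L : ℝ) (hr : 0 < r) (hL : 0 < L)
    (lam1 lam2 : Fin M → ℝ)
    (hmin1 : ∀ lam : Fin M → ℝ,
      -(2 / n : ℝ) * ∑ i, ∑ j, lam1 j * fj j (X i)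
          + (∫ x, (∑ j, lam1 j * fj j x) ^ 2) + 8 * r * L * ∑ k, |lam1 k|
        ≤ -(2 / n : ℝ) * ∑ i, ∑ j, lam j * fj j (X i)
          + (∫ x, (∑ j, lam j * fj j x) ^ 2) + 8 * r * L * ∑ k, |lam k|)
    (hmin2 : ∀ lam : Fin M → ℝ,
      -(2 / n : ℝ) * ∑ i, ∑ j, lam2 j * fj j (X i)
          + (∫ x, (∑ j, lam2 j * fj j x) ^ 2) + 8 * r * L * ∑ k, |lam2 k|
        ≤ -(2 / n : ℝ) * ∑ i, ∑ j, lam j * fj j (X i)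
          + (∫ x, (∑ j, lam j * fj j x) ^ 2) + 8 * r * L * ∑ k, |lam k|) :
    (∀ k : Fin M, ∑ j, (lam1 j - lam2 j) * ∫ x, fj j x * fj k x = 0)
    ∧ (∫ x, (∑ j, lam1 j * fj j x - ∑ j, lam2 j * fj j x) ^ 2) = 0
    ∧ {k : Fin M |
          |(n : ℝ)⁻¹ * ∑ i, fj k (X i) - ∑ j, lam1 j * ∫ x, fj j x * fj k x| = 4 * r * L}
        = {k : Fin M |
          |(n : ℝ)⁻¹ * ∑ i, fj k (X i) - ∑ j, lam2 j * ∫ x, fj j x * fj k x| = 4 * r * L} :=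
  spades_minimizers_same_support_general X fj hfj r L hr hL lam1 lam2 hmin1 hmin2
end
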